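/- arXiv:1910.06202 — 3 statements merged into one kernel-verified Lean document; each statement's English description precedes it below -/
import Mathlib

section
/- The selection function g on U = {0,1,2,3} defined by g(i,X) = {1} if X = {1,2} and i = 0, g(i,X) = {i} if i ∈ X, and g(i,X) = X otherwise, satisfies the CV condition: for all i ∈ U and X, Y ⊆ U, if g(i,X) ∩ Y ≠ ∅ then g(i, X ∩ Y) ⊆ g(i,X). -/
open Classical in
noncomputable def g (i : Fin 4) (X : Set (Fin 4)) : Set (Fin 4) :=
  if X = ({1, 2} : Set (Fin 4)) ∧ i = 0 then {1}
  else if i ∈ X then {i}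
  else X

theorem g_cv : ∀ (i : Fin 4) (X Y : Set (Fin 4)), g i X ∩ Y ≠ ∅ → g i (X ∩ Y) ⊆ g i X := by
  intro i X Y h
  unfold g at *
  by_cases h1 : X = ({1,2} : Set (Fin 4)) ∧ i = 0
  · rw [if_pos h1] at *
    obtain ⟨hX, hi⟩ := h1
    have h1Y : (1 : Fin 4) ∈ Y := by
      obtain ⟨x, hx1, hxY⟩ := Set.nonempty_iff_ne_empty.2 h
      simp only [Set.mem_singleton_iff] at hx1; subst hx1; exact hxY
    by_cases h2 : X ∩ Y = ({1,2} : Set (Fin 4)) ∧ i = 0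
    · rw [if_pos h2]
    · rw [if_neg h2]
      have hni : i ∉ X ∩ Y := by
        subst hi hX; rintro ⟨ha, _⟩; simp at ha
      rw [if_neg hni]
      rintro x ⟨hxX, hxY⟩
      subst hX
      rcases hxX with hx | hx
      · simp [hx]
      · exfalso
        apply h2
        refine ⟨?_, hi⟩
        ext z; constructor
        · rintro ⟨hz1, _⟩; exact hz1
        · rintro (hz | hz)
          · subst hz; exact ⟨Or.inl rfl, h1Y⟩
          · subst hz
            simp only [Set.mem_singleton_iff] at hx; subst hx
            exact ⟨Or.inr rfl, hxY⟩
  · rw [if_neg h1] at *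
    by_cases h2 : i ∈ X
    · rw [if_pos h2] at *
      have hiY : i ∈ Y := by
        obtain ⟨x, hx, hxY⟩ := Set.nonempty_iff_ne_empty.2 h
        simp only [Set.mem_singleton_iff] at hx; subst hx; exact hxY
      have h3 : ¬(X ∩ Y = ({1,2} : Set (Fin 4)) ∧ i = 0) := by
        rintro ⟨hA, hi0⟩
        have hmem : i ∈ X ∩ Y := ⟨h2, hiY⟩
        rw [hA] at hmem; subst hi0; simp at hmem
      rw [if_neg h3]
      simp [Set.mem_inter_iff, h2, hiY]
    · rw [if_neg h2] at *
      by_cases h3 : X ∩ Y = ({1,2} : Set (Fin 4)) ∧ i = 0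
      · rw [if_pos h3]
        intro x hx
        simp only [Set.mem_singleton_iff] at hx; subst hx
        have hmem : (1:Fin 4) ∈ X ∩ Y := by rw [h3.1]; simp
        exact hmem.1
      · rw [if_neg h3]
        have hni : i ∉ X ∩ Y := fun hm => h2 hm.1
        rw [if_neg hni]
        exact Set.inter_subset_left
end

section
/- The selection function g on U = {0,1,2,3} defined by g(i,X) = {1} if X = {1,2} and i = 0, g(i,X) = {i} if i ∈ X, and g(i,X) = X otherwise, satisfies the CSO condition: for all i ∈ U and X, Y ⊆ U, if g(i,X) ⊆ Y and g(i,Y) ⊆ X then g(i,X) = g(i,Y). -/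
lemma g_zero_pair : g 0 {1, 2} = {1} := by
  simp [g]

lemma g_of_mem {i : Fin 4} {X : Set (Fin 4)} (hi : i ∈ X) : g i X = {i} := by
  have hexc : ¬(X = {1, 2} ∧ i = 0) := by
    rintro ⟨rfl, rfl⟩
    simp at hi
  simp [g, hexc, hi]

lemma g_of_not_mem {i : Fin 4} {X : Set (Fin 4)} (hi : i ∉ X) (hexc : ¬(X = {1, 2} ∧ i = 0)) :
    g i X = X := by
  simp [g, hexc, hi]

lemma g_eq_of_mem {i : Fin 4} {X Y : Set (Fin 4)} (hi : i ∈ X) (hXY : g i X ⊆ Y) :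
    g i X = g i Y := by
  rw [g_of_mem hi] at hXY ⊢
  rw [g_of_mem (hXY rfl)]

lemma g_zero_pair_eq {Y : Set (Fin 4)} (hXY : g 0 {1, 2} ⊆ Y) (hYX : g 0 Y ⊆ {1, 2}) :
    g 0 {1, 2} = g 0 Y := by
  rw [g_zero_pair] at hXY ⊢
  have h1 : (1 : Fin 4) ∈ Y := hXY rfl
  by_cases hpair : Y = {1, 2}
  · rw [hpair, g_zero_pair]
  have h0 : (0 : Fin 4) ∉ Y := fun h0 => by
    simp [g_of_mem h0] at hYX
  rw [g_of_not_mem h0 (fun h => hpair h.1)] at hYX ⊢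
  rcases Set.subset_pair_iff_eq.1 hYX with rfl | rfl | rfl | rfl
  · simp at h1
  · rfl
  · simp at h1
  · exact (hpair rfl).elim

theorem g_cso : ∀ (i : Fin 4) (X Y : Set (Fin 4)), g i X ⊆ Y → g i Y ⊆ X → g i X = g i Y := by
  intro i X Y hXY hYX
  by_cases hiX : i ∈ X
  · exact g_eq_of_mem hiX hXY
  by_cases hiY : i ∈ Y
  · exact (g_eq_of_mem hiY hYX).symm
  by_cases hX : X = {1, 2} ∧ i = 0
  · obtain ⟨rfl, rfl⟩ := hX
    exact g_zero_pair_eq hXY hYX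
  by_cases hY : Y = {1, 2} ∧ i = 0
  · obtain ⟨rfl, rfl⟩ := hY
    exact (g_zero_pair_eq hYX hXY).symm
  rw [g_of_not_mem hiX hX, g_of_not_mem hiY hY] at *
  exact hXY.antisymm hYX
end

section
/- There exists a selection-function frame in which the axioms ID, CM, CC, CV, MOD', CSO, CMP, CS of Nute's system VCn are all valid and which preserves validity under RCEC, but in which the axiom CA, (φ > χ) ∧ (ψ > χ) → (φ ∨ ψ > χ), fails. Hence CA is not derivable in VCn (and so not in Vn). -/
inductive Form where
  | var : Nat → Form
  | bot : Form
  | neg : Form → Form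
  | conj : Form → Form → Form
  | disj : Form → Form → Form
  | imp : Form → Form → Form
  | cond : Form → Form → Form

def Form.iff (p q : Form) : Form := Form.conj (Form.imp p q) (Form.imp q p)

/-- A boolean valuation respecting the classical connectives
(conditional subformulas are treated as atoms). -/
def ClassVal (v : Form → Bool) : Prop :=
  v Form.bot = false ∧
  (∀ p, v (Form.neg p) = ! v p) ∧
  (∀ p q, v (Form.conj p q) = (v p && v q)) ∧
  (∀ p q, v (Form.disj p q) = (v p || v q)) ∧
  (∀ p q, v (Form.imp p q) = (! v p || v q))

/-- Classical tautologies. -/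
def IsTaut (p : Form) : Prop := ∀ v, ClassVal v → v p = true

/-- Nute's system VCn = ⟨PC, ID, CM, CC, CV, MOD', CSO, CMP, CS; RCEC⟩. -/
inductive Der : Form → Prop where
  | taut : ∀ p, IsTaut p → Der p
  | mp : ∀ p q, Der (Form.imp p q) → Der p → Der q
  | id : ∀ p, Der (Form.cond p p)
  | cm : ∀ p q r, Der (Form.imp (Form.cond p (Form.conj q r))
      (Form.conj (Form.cond p q) (Form.cond p r)))
  | cc : ∀ p q r, Der (Form.imp (Form.conj (Form.cond p q) (Form.cond p r))
      (Form.cond p (Form.conj q r)))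
  | cv : ∀ p q r, Der (Form.imp
      (Form.conj (Form.cond p r) (Form.neg (Form.cond p (Form.neg q))))
      (Form.cond (Form.conj p q) r))
  | mod' : ∀ p q, Der (Form.imp (Form.cond (Form.neg p) p) (Form.cond q p))
  | cso : ∀ p q r, Der (Form.imp (Form.conj (Form.cond p q) (Form.cond q p))
      (Form.iff (Form.cond p r) (Form.cond q r)))
  | cmp : ∀ p q, Der (Form.imp (Form.cond p q) (Form.imp p q))
  | cs : ∀ p q, Der (Form.imp (Form.conj p q) (Form.cond p q))
  | rcec : ∀ p q r, Der (Form.iff p q) → Der (Form.iff (Form.cond r p) (Form.cond r q))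

/-- Truth set of a formula in a selection-function model (W, f, V). -/
def truthSet {W : Type} (f : W → Set W → Set W) (V : Nat → Set W) : Form → Set W
  | Form.var n => V n
  | Form.bot => ∅
  | Form.neg p => (truthSet f V p)ᶜ
  | Form.conj p q => truthSet f V p ∩ truthSet f V q
  | Form.disj p q => truthSet f V p ∪ truthSet f V q
  | Form.imp p q => (truthSet f V p)ᶜ ∪ truthSet f V q
  | Form.cond p q => {w | f w (truthSet f V p) ⊆ truthSet f V q}

/-- Validity in a frame (W, f). -/
def FrameValid {W : Type} (f : W → Set W → Set W) (p : Form) : Prop :=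
  ∀ V : Nat → Set W, truthSet f V p = Set.univ



open Classical in
noncomputable def myg : Set (Fin 4) → Set (Fin 4) := fun A =>
  if (1:Fin 4) ∈ A ∧ (2:Fin 4) ∈ A ∧ (3:Fin 4) ∈ A then A
  else if (1:Fin 4) ∈ A then {1} else if (2:Fin 4) ∈ A then {2}
  else if (3:Fin 4) ∈ A then {3} else ∅

open Classical in
noncomputable def myf : Fin 4 → Set (Fin 4) → Set (Fin 4) := fun w A =>
  if w ∈ A then {w} else if w = 0 then myg A else ∅

lemma myg_sub (A : Set (Fin 4)) : myg A ⊆ A := by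
  unfold myg; split_ifs <;> simp_all [Set.singleton_subset_iff]

lemma myg_empty {A : Set (Fin 4)} (h0 : (0:Fin 4) ∉ A) (h : myg A = ∅) : A = ∅ := by
  unfold myg at h
  split_ifs at h with h1 h2 h3 h4
  · exact h
  · simp at h
  · simp at h
  · simp at h
  · ext x
    simp only [Set.mem_empty_iff_false, iff_false]
    intro hx
    fin_cases x <;> tauto

lemma myg_cv {A B : Set (Fin 4)} (hx : ∃ x, x ∈ myg A ∧ x ∈ B) :
    myg (A ∩ B) ⊆ myg A := by
  by_cases h1 : (1:Fin 4) ∈ A <;> by_cases h2 : (2:Fin 4) ∈ A <;>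
    by_cases h3 : (3:Fin 4) ∈ A <;> by_cases k1 : (1:Fin 4) ∈ B <;>
    by_cases k2 : (2:Fin 4) ∈ B <;> by_cases k3 : (3:Fin 4) ∈ B <;>
    simp_all [myg, Set.subset_def]

lemma myg_cso {A B : Set (Fin 4)} (hAB : myg A ⊆ B) (hBA : myg B ⊆ A) : myg A = myg B := by
  by_cases h1 : (1:Fin 4) ∈ A <;> by_cases h2 : (2:Fin 4) ∈ A <;>
    by_cases h3 : (3:Fin 4) ∈ A <;> by_cases k1 : (1:Fin 4) ∈ B <;>
    by_cases k2 : (2:Fin 4) ∈ B <;> by_cases k3 : (3:Fin 4) ∈ B <;>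
    simp_all [myg, Set.subset_def] <;>
    exact Set.ext fun x => ⟨fun h => hAB x h, fun h => hBA x h⟩

lemma myf_mem {w : Fin 4} {A : Set (Fin 4)} (h : w ∈ A) : myf w A = {w} := by
  simp [myf, h]

lemma myf_zero {A : Set (Fin 4)} (h : (0:Fin 4) ∉ A) : myf 0 A = myg A := by
  rw [myf, if_neg h, if_pos rfl]

lemma myf_other {w : Fin 4} {A : Set (Fin 4)} (h : w ∉ A) (h0 : w ≠ 0) : myf w A = ∅ := by
  rw [myf, if_neg h, if_neg h0]

lemma myf_id (w : Fin 4) (A : Set (Fin 4)) : myf w A ⊆ A := by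
  unfold myf; split_ifs with h _
  · simpa
  · exact myg_sub A
  · simp

lemma myf_cv {w : Fin 4} {A B : Set (Fin 4)} (hx : ∃ x, x ∈ myf w A ∧ x ∈ B) :
    myf w (A ∩ B) ⊆ myf w A := by
  by_cases hw : w ∈ A
  · rw [myf_mem hw] at hx ⊢
    obtain ⟨x, hx1, hx2⟩ := hx
    simp only [Set.mem_singleton_iff] at hx1; subst hx1
    simp [myf_mem (Set.mem_inter hw hx2), myf_mem hw]
  · by_cases h0 : w = 0
    · subst h0
      have hw2 : (0:Fin 4) ∉ A ∩ B := fun h => hw h.1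
      rw [myf_zero hw] at hx ⊢
      rw [myf_zero hw2]
      exact myg_cv hx
    · rw [myf_other hw h0] at hx
      obtain ⟨x, hx1, _⟩ := hx
      exact absurd hx1 (by simp)

lemma myf_cso {w : Fin 4} {A B : Set (Fin 4)} (hAB : myf w A ⊆ B) (hBA : myf w B ⊆ A) :
    myf w A = myf w B := by
  by_cases hwA : w ∈ A
  · have hwB : w ∈ B := hAB (by rw [myf_mem hwA]; rfl)
    rw [myf_mem hwA, myf_mem hwB]
  · by_cases hwB : w ∈ B
    · exact absurd (hBA (by rw [myf_mem hwB]; rfl)) hwA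
    · by_cases h0 : w = 0
      · subst h0
        rw [myf_zero hwA] at hAB ⊢
        rw [myf_zero hwB] at hBA ⊢
        exact myg_cso hAB hBA
      · rw [myf_other hwA h0, myf_other hwB h0]

lemma myf_mod' {w : Fin 4} {A B : Set (Fin 4)} (h : myf w Aᶜ ⊆ A) : myf w B ⊆ A := by
  by_cases hw : w ∈ Aᶜ
  · exact absurd (h (by rw [myf_mem hw]; rfl)) hw
  · have hwA : w ∈ A := not_not.mp hw
    by_cases h0 : w = 0
    · subst h0
      rw [myf_zero hw] at h
      have hempty : myg Aᶜ = ∅ := by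
        ext x
        simp only [Set.mem_empty_iff_false, iff_false]
        exact fun hx => (myg_sub _ hx) (h hx)
      have : Aᶜ = ∅ := myg_empty hw hempty
      have hA : A = Set.univ := by
        rw [← compl_compl A, this, Set.compl_empty]
      rw [hA]; exact fun x _ => trivial
    · by_cases hwB : w ∈ B
      · rw [myf_mem hwB]; simpa
      · rw [myf_other hwB h0]; simp

lemma mem_cond {W : Type} {f : W → Set W → Set W} {V : Nat → Set W} {p q : Form} {w : W} :
    w ∈ truthSet f V (Form.cond p q) ↔ f w (truthSet f V p) ⊆ truthSet f V q := Iff.rfl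

open Classical in
lemma taut_valid {W : Type} (f : W → Set W → Set W) {p : Form} (h : IsTaut p) :
    FrameValid f p := by
  intro V
  rw [Set.eq_univ_iff_forall]
  intro w
  set v : Form → Bool := fun φ => decide (w ∈ truthSet f V φ) with hv
  have hcv : ClassVal v := by
    refine ⟨by simp [hv, truthSet], fun p => ?_, fun p q => ?_, fun p q => ?_, fun p q => ?_⟩
    · by_cases h : w ∈ truthSet f V p <;> simp [hv, truthSet, h]
    · by_cases h1 : w ∈ truthSet f V p <;> by_cases h2 : w ∈ truthSet f V q <;>
        simp [hv, truthSet, h1, h2]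
    · by_cases h1 : w ∈ truthSet f V p <;> by_cases h2 : w ∈ truthSet f V q <;>
        simp [hv, truthSet, h1, h2]
    · by_cases h1 : w ∈ truthSet f V p <;> by_cases h2 : w ∈ truthSet f V q <;>
        simp [hv, truthSet, h1, h2]
  have := h v hcv
  simpa [hv] using this

lemma valid_id (p : Form) : FrameValid myf (Form.cond p p) := by
  intro V
  rw [Set.eq_univ_iff_forall]
  intro w
  exact mem_cond.mpr (myf_id w _)

lemma valid_cm (p q r : Form) : FrameValid myf (Form.imp (Form.cond p (Form.conj q r))
    (Form.conj (Form.cond p q) (Form.cond p r))) := by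
  intro V
  rw [Set.eq_univ_iff_forall]
  intro w
  simp only [truthSet, Set.mem_union, Set.mem_compl_iff, Set.mem_setOf_eq, Set.mem_inter_iff,
    Set.subset_inter_iff]
  tauto

lemma valid_cc (p q r : Form) : FrameValid myf (Form.imp
    (Form.conj (Form.cond p q) (Form.cond p r)) (Form.cond p (Form.conj q r))) := by
  intro V
  rw [Set.eq_univ_iff_forall]
  intro w
  simp only [truthSet, Set.mem_union, Set.mem_compl_iff, Set.mem_setOf_eq, Set.mem_inter_iff,
    Set.subset_inter_iff]
  tauto

lemma valid_cv (p q r : Form) : FrameValid myf (Form.imp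
    (Form.conj (Form.cond p r) (Form.neg (Form.cond p (Form.neg q))))
    (Form.cond (Form.conj p q) r)) := by
  intro V
  rw [Set.eq_univ_iff_forall]
  intro w
  simp only [truthSet, Set.mem_union, Set.mem_compl_iff, Set.mem_setOf_eq, Set.mem_inter_iff]
  by_cases hc : myf w (truthSet myf V p) ⊆ truthSet myf V r ∧
      ¬ myf w (truthSet myf V p) ⊆ (truthSet myf V q)ᶜ
  · obtain ⟨h1, h2⟩ := hc
    obtain ⟨x, hx1, hx2⟩ := Set.not_subset.mp h2
    exact Or.inr (fun y hy => h1 (myf_cv ⟨x, hx1, not_not.mp hx2⟩ hy))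
  · exact Or.inl hc

lemma valid_mod (p q : Form) : FrameValid myf (Form.imp (Form.cond (Form.neg p) p)
    (Form.cond q p)) := by
  intro V
  rw [Set.eq_univ_iff_forall]
  intro w
  simp only [truthSet, Set.mem_union, Set.mem_compl_iff, Set.mem_setOf_eq]
  by_cases hc : myf w (truthSet myf V p)ᶜ ⊆ truthSet myf V p
  · exact Or.inr (myf_mod' hc)
  · exact Or.inl hc

lemma valid_cso (p q r : Form) : FrameValid myf (Form.imp
    (Form.conj (Form.cond p q) (Form.cond q p))
    (Form.iff (Form.cond p r) (Form.cond q r))) := by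
  intro V
  rw [Set.eq_univ_iff_forall]
  intro w
  simp only [Form.iff, truthSet, Set.mem_union, Set.mem_compl_iff, Set.mem_setOf_eq,
    Set.mem_inter_iff]
  by_cases hc : myf w (truthSet myf V p) ⊆ truthSet myf V q ∧
      myf w (truthSet myf V q) ⊆ truthSet myf V p
  · have heq := myf_cso hc.1 hc.2
    rw [heq]
    tauto
  · exact Or.inl hc

lemma valid_cmp (p q : Form) : FrameValid myf (Form.imp (Form.cond p q)
    (Form.imp p q)) := by
  intro V
  rw [Set.eq_univ_iff_forall]
  intro w
  simp only [truthSet, Set.mem_union, Set.mem_compl_iff, Set.mem_setOf_eq]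
  by_cases hc : myf w (truthSet myf V p) ⊆ truthSet myf V q
  · by_cases hw : w ∈ truthSet myf V p
    · exact Or.inr (Or.inr (hc (by rw [myf_mem hw]; rfl)))
    · exact Or.inr (Or.inl hw)
  · exact Or.inl hc

lemma valid_cs (p q : Form) : FrameValid myf (Form.imp (Form.conj p q)
    (Form.cond p q)) := by
  intro V
  rw [Set.eq_univ_iff_forall]
  intro w
  simp only [truthSet, Set.mem_union, Set.mem_compl_iff, Set.mem_setOf_eq, Set.mem_inter_iff]
  by_cases hc : w ∈ truthSet myf V p ∧ w ∈ truthSet myf V q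
  · refine Or.inr ?_
    rw [myf_mem hc.1]
    simpa using hc.2
  · exact Or.inl hc

lemma valid_rcec (p q r : Form) (h : FrameValid myf (Form.iff p q)) :
    FrameValid myf (Form.iff (Form.cond r p) (Form.cond r q)) := by
  intro V
  have heq : truthSet myf V p = truthSet myf V q := by
    have := h V
    ext x
    have hx : x ∈ truthSet myf V (Form.iff p q) := by rw [this]; trivial
    simp only [Form.iff, truthSet, Set.mem_inter_iff, Set.mem_union, Set.mem_compl_iff] at hx
    constructor
    · intro hp; rcases hx.1 with h' | h' <;> tauto
    · intro hq; rcases hx.2 with h' | h' <;> tauto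
  rw [Set.eq_univ_iff_forall]
  intro w
  simp only [Form.iff, truthSet, Set.mem_inter_iff, Set.mem_union, Set.mem_compl_iff,
    Set.mem_setOf_eq, heq]
  tauto

lemma valid_mp {p q : Form} (h1 : FrameValid myf (Form.imp p q)) (h2 : FrameValid myf p) :
    FrameValid myf q := by
  intro V
  rw [Set.eq_univ_iff_forall]
  intro w
  have hw1 : w ∈ truthSet myf V (Form.imp p q) := by rw [h1 V]; trivial
  have hw2 : w ∈ truthSet myf V p := by rw [h2 V]; trivial
  simp only [truthSet, Set.mem_union, Set.mem_compl_iff] at hw1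
  tauto

lemma soundness {p : Form} (h : Der p) : FrameValid myf p := by
  induction h with
  | taut p hp => exact taut_valid myf hp
  | mp p q _ _ ih1 ih2 => exact valid_mp ih1 ih2
  | id p => exact valid_id p
  | cm p q r => exact valid_cm p q r
  | cc p q r => exact valid_cc p q r
  | cv p q r => exact valid_cv p q r
  | mod' p q => exact valid_mod p q
  | cso p q r => exact valid_cso p q r
  | cmp p q => exact valid_cmp p q
  | cs p q => exact valid_cs p q
  | rcec p q r _ ih => exact valid_rcec p q r ih

noncomputable def ceV : Nat → Set (Fin 4) :=
  fun n => if n = 0 then {1} else if n = 1 then {2, 3} else if n = 2 then {1, 2} else ∅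

lemma myg_comp1 : myg {1} = {1} := by
  unfold myg
  rw [if_neg (by simp), if_pos (by simp)]

lemma myg_comp2 : myg {2, 3} = {2} := by
  unfold myg
  rw [if_neg (by simp), if_neg (by simp), if_pos (by simp)]

lemma myg_comp3 : myg ({1} ∪ {2, 3}) = {1} ∪ {2, 3} := by
  unfold myg
  rw [if_pos (by simp)]

lemma ca_fails : ¬ FrameValid myf (Form.imp
    (Form.conj (Form.cond (Form.var 0) (Form.var 2)) (Form.cond (Form.var 1) (Form.var 2)))
    (Form.cond (Form.disj (Form.var 0) (Form.var 1)) (Form.var 2))) := by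
  intro h
  have := h ceV
  have h0 : (0 : Fin 4) ∈ truthSet myf ceV (Form.imp
      (Form.conj (Form.cond (Form.var 0) (Form.var 2)) (Form.cond (Form.var 1) (Form.var 2)))
      (Form.cond (Form.disj (Form.var 0) (Form.var 1)) (Form.var 2))) := by
    rw [this]; trivial
  simp only [truthSet, Set.mem_union, Set.mem_compl_iff, Set.mem_setOf_eq,
    Set.mem_inter_iff] at h0
  have hv0 : ceV 0 = {1} := rfl
  have hv1 : ceV 1 = {2, 3} := rfl
  have hv2 : ceV 2 = ({1, 2} : Set (Fin 4)) := rfl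
  rw [hv0, hv1, hv2] at h0
  have e1 : myf 0 {1} = {1} := by
    rw [myf_zero (by simp), myg_comp1]
  have e2 : myf 0 {2, 3} = {2} := by
    rw [myf_zero (by simp), myg_comp2]
  have e3 : myf 0 ({1} ∪ {2, 3}) = {1} ∪ {2, 3} := by
    rw [myf_zero (by simp), myg_comp3]
  rw [e1, e2, e3] at h0
  rcases h0 with h | h
  · exact h ⟨by simp, by simp⟩
  · have : (3 : Fin 4) ∈ ({1, 2} : Set (Fin 4)) := h (by simp)
    simp at this

/-- There is a selection-function frame validating all axioms of VCn and
preserving validity under RCEC, in which an instance of CA fails; hence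
CA is not derivable in VCn (nor in the weaker Vn). -/
theorem ca_not_derivable_in_VCn :
    (∃ (W : Type) (f : W → Set W → Set W),
      (∀ p, IsTaut p → FrameValid f p) ∧
      (∀ p, FrameValid f (Form.cond p p)) ∧
      (∀ p q r, FrameValid f (Form.imp (Form.cond p (Form.conj q r))
        (Form.conj (Form.cond p q) (Form.cond p r)))) ∧
      (∀ p q r, FrameValid f (Form.imp (Form.conj (Form.cond p q) (Form.cond p r))
        (Form.cond p (Form.conj q r)))) ∧
      (∀ p q r, FrameValid f (Form.imp
        (Form.conj (Form.cond p r) (Form.neg (Form.cond p (Form.neg q))))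
        (Form.cond (Form.conj p q) r))) ∧
      (∀ p q, FrameValid f (Form.imp (Form.cond (Form.neg p) p) (Form.cond q p))) ∧
      (∀ p q r, FrameValid f (Form.imp (Form.conj (Form.cond p q) (Form.cond q p))
        (Form.iff (Form.cond p r) (Form.cond q r)))) ∧
      (∀ p q, FrameValid f (Form.imp (Form.cond p q) (Form.imp p q))) ∧
      (∀ p q, FrameValid f (Form.imp (Form.conj p q) (Form.cond p q))) ∧
      (∀ p q r, FrameValid f (Form.iff p q) →
        FrameValid f (Form.iff (Form.cond r p) (Form.cond r q))) ∧
      (∃ p q r, ¬ FrameValid f (Form.imp (Form.conj (Form.cond p r) (Form.cond q r))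
        (Form.cond (Form.disj p q) r)))) ∧
    ¬ Der (Form.imp
      (Form.conj (Form.cond (Form.var 0) (Form.var 2)) (Form.cond (Form.var 1) (Form.var 2)))
      (Form.cond (Form.disj (Form.var 0) (Form.var 1)) (Form.var 2))) := by
  constructor
  · exact ⟨Fin 4, myf, fun p hp => taut_valid myf hp, valid_id, valid_cm, valid_cc,
      valid_cv, valid_mod, valid_cso, valid_cmp, valid_cs, valid_rcec,
      Form.var 0, Form.var 1, Form.var 2, ca_fails⟩
  · intro hd
    exact ca_fails (soundness hd)
end
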